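/- Let D = {z_{m_2}, ..., z_1, 0, c_1, ..., c_{m_1}} with z_{m_2} < ... < z_1 < 0 < c_1 < ... < c_{m_1}, and let w ≥ max( max_{0 ≤ i ≤ m_1−1} (c_{m_1} − c_i − z_{m_2})/(c_{i+1} − c_i), max_{1 ≤ i ≤ m_2} (−z_{m_2} + z_{i−1})/(−z_i + z_{i−1}) ) where c_0 = z_0 = 0. Then any q-ary additive (w,2d)-disjunct t×n matrix A determines every d-sparse vector x ∈ Dⁿ uniquely from Ax: if x, x' ∈ Dⁿ are d-sparse and Ax = Ax', then x = x'. -/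

import Mathlib

/-- Additive `(w,d)`-disjunct matrix. -/
def AddDisjunct {t n : ℕ} (M : Fin t → Fin n → ℝ) (w : ℝ) (d : ℕ) : Prop :=
  ∀ S : Finset (Fin n), S.card ≤ d → ∀ k ∉ S, ∃ i, M i k > w * ∑ j ∈ S, M i j

/-- Entries of `M` belong to `{0,1,...,q-1}`. -/
def QaryEntries {t n : ℕ} (M : Fin t → Fin n → ℝ) (q : ℕ) : Prop :=
  ∀ i j, ∃ a : ℕ, a < q ∧ M i j = a

/-!
The bound on `w` forces `w ≥ 1`: the last term of its second maximum equals `1`.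
For a `(1, D)`-disjunct nonnegative matrix, a nonzero vector `y` supported on at most `D + 1`
coordinates cannot satisfy `A y = 0`: at a coordinate `k` where `|y k|` is maximal, a row with
`A i k > ∑_{j ∈ supp y \ {k}} A i j` gives
`A i k |y k| = |∑_{j ≠ k} A i j y j| ≤ (∑_{j ∈ supp y \ {k}} A i j) |y k| < A i k |y k|`.
Apply this to `y = x - x'`, supported on at most `2d` coordinates.
-/

theorem QaryEntries.nonneg {t n q : ℕ} {A : Fin t → Fin n → ℝ} (hA : QaryEntries A q)
    (i : Fin t) (j : Fin n) : 0 ≤ A i j := by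
  obtain ⟨a, -, ha⟩ := hA i j
  exact ha ▸ Nat.cast_nonneg a

theorem AddDisjunct.mono_weight {t n d : ℕ} {A : Fin t → Fin n → ℝ} {w w' : ℝ}
    (hA : ∀ i j, 0 ≤ A i j) (hw : w' ≤ w) (h : AddDisjunct A w d) : AddDisjunct A w' d := by
  intro S hS k hk
  obtain ⟨i, hi⟩ := h S hS k hk
  exact ⟨i, hi.trans_le' <|
    mul_le_mul_of_nonneg_right hw <| Finset.sum_nonneg fun j _ => hA i j⟩

theorem mul_abs_le_sum_mul_abs_of_sum_mul_eq_zero {ι : Type*} [Fintype ι] [DecidableEq ι]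
    {a y : ι → ℝ} (ha : ∀ j, 0 ≤ a j) {k : ι} {T : Finset ι} (hkT : k ∉ T)
    (hy : ∀ j ∉ insert k T, y j = 0) (hmax : ∀ j, |y j| ≤ |y k|)
    (hsum : ∑ j, a j * y j = 0) :
    a k * |y k| ≤ (∑ j ∈ T, a j) * |y k| := by
  have hsum' : a k * y k + ∑ j ∈ T, a j * y j = 0 := by
    rw [← Finset.sum_insert hkT (f := fun j => a j * y j), ← hsum]
    exact Finset.sum_subset (Finset.subset_univ _) fun j _ hj => by rw [hy j hj, mul_zero]
  calc a k * |y k| = |∑ j ∈ T, a j * y j| := by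
        rw [← abs_of_nonneg (ha k), ← abs_mul, eq_neg_of_add_eq_zero_left hsum', abs_neg]
    _ ≤ ∑ j ∈ T, |a j * y j| := Finset.abs_sum_le_sum_abs _ _
    _ ≤ ∑ j ∈ T, a j * |y k| := Finset.sum_le_sum fun j _ => by
        rw [abs_mul, abs_of_nonneg (ha j)]
        exact mul_le_mul_of_nonneg_left (hmax j) (ha j)
    _ = (∑ j ∈ T, a j) * |y k| := (Finset.sum_mul _ _ _).symm

theorem AddDisjunct.eq_zero_of_mulVec_eq_zero {t n D : ℕ} {A : Fin t → Fin n → ℝ}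
    (hA : ∀ i j, 0 ≤ A i j) (hdisj : AddDisjunct A 1 D) {y : Fin n → ℝ}
    {S : Finset (Fin n)} (hS : S.card ≤ D + 1) (hy : ∀ j ∉ S, y j = 0)
    (hAy : ∀ i, ∑ j, A i j * y j = 0) : y = 0 := by
  by_contra hne
  obtain ⟨j₀, hj₀⟩ := Function.ne_iff.mp hne
  obtain ⟨k, -, hmax⟩ := Finset.exists_max_image Finset.univ (fun j => |y j|)
    ⟨j₀, Finset.mem_univ j₀⟩
  have hyk : 0 < |y k| := (abs_pos.mpr hj₀).trans_le (hmax j₀ (Finset.mem_univ j₀))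
  have hkS : k ∈ S := by
    by_contra hkS
    simp [hy k hkS] at hyk
  have hT : (S.erase k).card ≤ D := by
    have := Finset.card_erase_of_mem hkS
    omega
  obtain ⟨i, hi⟩ := hdisj (S.erase k) hT k (Finset.notMem_erase k S)
  have hle := mul_abs_le_sum_mul_abs_of_sum_mul_eq_zero (hA i) (Finset.notMem_erase k S)
    (fun j hj => hy j (by rwa [Finset.insert_erase hkS] at hj))
    (fun j => hmax j (Finset.mem_univ j)) (hAy i)
  rw [one_mul] at hi
  exact absurd (le_of_mul_le_mul_right hle hyk) (not_le.mpr hi)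

theorem one_le_of_forall_div_le {m : ℕ} (hm : 1 ≤ m) {z : Fin (m + 1) → ℝ}
    (hz : StrictAnti z) {w : ℝ}
    (hw : ∀ i : Fin m, (-z (Fin.last m) + z i.castSucc) / (-z i.succ + z i.castSucc) ≤ w) :
    1 ≤ w := by
  obtain ⟨m, rfl⟩ := Nat.exists_eq_add_of_le' hm
  have hpos : 0 < -z (Fin.last (m + 1)) + z (Fin.last m).castSucc :=
    by linarith [hz (Fin.castSucc_lt_last (Fin.last m))]
  simpa [Fin.succ_last, hpos.ne'] using hw (Fin.last m)

theorem general_identification_general (q t n m₂ d : ℕ) (hm₂ : 1 ≤ m₂)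
    (A : Fin t → Fin n → ℝ) (hq : QaryEntries A q)
    (z : Fin (m₂ + 1) → ℝ) (hzanti : StrictAnti z)
    (w : ℝ)
    (hwz : ∀ i : Fin m₂,
      (-z (Fin.last m₂) + z i.castSucc) / (-z i.succ + z i.castSucc) ≤ w)
    (hdisj : AddDisjunct A w (2 * d))
    (x x' : Fin n → ℝ)
    (hsparse : ∃ S : Finset (Fin n), S.card ≤ d ∧ ∀ j ∉ S, x j = 0)
    (hsparse' : ∃ S : Finset (Fin n), S.card ≤ d ∧ ∀ j ∉ S, x' j = 0)
    (houtcome : ∀ i, ∑ j, A i j * x j = ∑ j, A i j * x' j) :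
    x = x' := by
  obtain ⟨S, hS, hx⟩ := hsparse
  obtain ⟨S', hS', hx'⟩ := hsparse'
  have hdisj₁ : AddDisjunct A 1 (2 * d) :=
    hdisj.mono_weight hq.nonneg (one_le_of_forall_div_le hm₂ hzanti hwz)
  have hsupp : (S ∪ S').card ≤ 2 * d + 1 := by
    have := Finset.card_union_le S S'
    omega
  refine sub_eq_zero.mp <| hdisj₁.eq_zero_of_mulVec_eq_zero hq.nonneg hsupp (fun j hj => ?_)
    fun i => ?_
  · rw [Finset.mem_union, not_or] at hj
    simp [hx j hj.1, hx' j hj.2]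
  · simp only [Pi.sub_apply, mul_sub, Finset.sum_sub_distrib, houtcome i, sub_self]

/-- Theorem `general`: identification in the general case. -/
theorem general_identification (q t n m₁ m₂ d : ℕ) (hm₁ : 1 ≤ m₁) (hm₂ : 1 ≤ m₂)
    (A : Fin t → Fin n → ℝ) (hq : QaryEntries A q)
    (c : Fin (m₁ + 1) → ℝ) (hc0 : c 0 = 0) (hcmono : StrictMono c)
    (z : Fin (m₂ + 1) → ℝ) (hz0 : z 0 = 0) (hzanti : StrictAnti z)
    (w : ℝ)
    (hwc : ∀ i : Fin m₁,
      (c (Fin.last m₁) - c i.castSucc - z (Fin.last m₂)) / (c i.succ - c i.castSucc) ≤ w)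
    (hwz : ∀ i : Fin m₂,
      (-z (Fin.last m₂) + z i.castSucc) / (-z i.succ + z i.castSucc) ≤ w)
    (hdisj : AddDisjunct A w (2 * d))
    (x x' : Fin n → ℝ)
    (halpha : ∀ j, x j ∈ Set.range c ∪ Set.range z)
    (halpha' : ∀ j, x' j ∈ Set.range c ∪ Set.range z)
    (hsparse : ∃ S : Finset (Fin n), S.card ≤ d ∧ ∀ j ∉ S, x j = 0)
    (hsparse' : ∃ S : Finset (Fin n), S.card ≤ d ∧ ∀ j ∉ S, x' j = 0)
    (houtcome : ∀ i, ∑ j, A i j * x j = ∑ j, A i j * x' j) :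
    x = x' :=
  general_identification_general q t n m₂ d hm₂ A hq z hzanti w hwz hdisj x x' hsparse hsparse'
    houtcome
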